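/- arXiv:2509.26380 — 2 statements merged into one kernel-verified Lean document; each statement's English description precedes it below -/
import Mathlib

section
/- Let ℓ ∈ [0, π] and let φ be uniformly distributed on [0, π]. Define M = sup over θ ∈ [0, ℓ] of |cos(θ − φ)|. Then M = 1 with probability ℓ/π, and conditionally on M < 1, M is distributed as cos(U) where U is uniform on [0, π/2 − ℓ/2]. -/
open MeasureTheory ProbabilityTheory Real Set

private lemma abs_cos_le_cos {x t : ℝ} (ht : 0 ≤ t) (h1 : t ≤ x) (h2 : t ≤ π - x) :
    |Real.cos x| ≤ Real.cos t := by
  rcases le_total x (π / 2) with hx | hx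
  · rw [abs_of_nonneg (Real.cos_nonneg_of_mem_Icc ⟨by linarith [Real.pi_pos], hx⟩)]
    exact Real.cos_le_cos_of_nonneg_of_le_pi ht (by linarith [Real.pi_pos]) h1
  · rw [abs_of_nonpos (Real.cos_nonpos_of_pi_div_two_le_of_le hx (by linarith)),
      ← Real.cos_pi_sub]
    exact Real.cos_le_cos_of_nonneg_of_le_pi ht (by linarith) h2

private lemma sup_formula {ℓ x : ℝ} (hℓ : ℓ ∈ Icc 0 π) (hx : x ∈ Icc 0 π) :
    sSup ((fun θ => |Real.cos (θ - x)|) '' Icc 0 ℓ) =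
      Real.cos (max 0 (min (x - ℓ) (π - x))) := by
  obtain ⟨hℓ0, hℓπ⟩ := hℓ
  obtain ⟨hx0, hxπ⟩ := hx
  apply IsGreatest.csSup_eq
  constructor
  · -- the value is attained
    rcases le_or_gt (min (x - ℓ) (π - x)) 0 with h | h
    · rw [max_eq_left h, Real.cos_zero]
      rcases le_or_gt x ℓ with h' | h'
      · exact ⟨x, ⟨hx0, h'⟩, by simp⟩
      · have hxpi : x = π := by
          rcases min_le_iff.mp h with h'' | h'' <;> linarith
        refine ⟨0, ⟨le_refl 0, hℓ0⟩, ?_⟩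
        simp [hxpi]
    · have h1 : 0 < x - ℓ := lt_of_lt_of_le h (min_le_left _ _)
      have h2 : 0 < π - x := lt_of_lt_of_le h (min_le_right _ _)
      rw [max_eq_right h.le]
      rcases le_total (x - ℓ) (π - x) with hc | hc
      · rw [min_eq_left hc]
        refine ⟨ℓ, ⟨hℓ0, le_refl ℓ⟩, ?_⟩
        show |Real.cos (ℓ - x)| = Real.cos (x - ℓ)
        have he : Real.cos (ℓ - x) = Real.cos (x - ℓ) := by
          rw [← Real.cos_neg, neg_sub]
        rw [he]
        exact abs_of_nonneg (Real.cos_nonneg_of_mem_Icc ⟨by linarith, by linarith⟩)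
      · rw [min_eq_right hc]
        refine ⟨0, ⟨le_refl 0, hℓ0⟩, ?_⟩
        show |Real.cos (0 - x)| = Real.cos (π - x)
        rw [zero_sub, Real.cos_neg, Real.cos_pi_sub]
        exact abs_of_nonpos
          (Real.cos_nonpos_of_pi_div_two_le_of_le (by linarith) (by linarith))
  · rintro y ⟨θ, ⟨hθ0, hθℓ⟩, rfl⟩
    rcases le_or_gt (min (x - ℓ) (π - x)) 0 with h | h
    · rw [max_eq_left h, Real.cos_zero]
      exact Real.abs_cos_le_one _
    · rw [max_eq_right h.le]
      have h1 : 0 < x - ℓ := lt_of_lt_of_le h (min_le_left _ _)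
      have he : |Real.cos (θ - x)| = |Real.cos (x - θ)| := by
        rw [← Real.cos_neg (x - θ), neg_sub]
      show |Real.cos (θ - x)| ≤ _
      rw [he]
      exact abs_cos_le_cos h.le
        (le_trans (min_le_left _ _) (by linarith))
        (le_trans (min_le_right _ _) (by linarith))

/-- Let `ℓ ∈ [0, π]`, let `φ` be uniform on `[0, π]`, and set
`M = sup_{θ ∈ [0, ℓ]} |cos(θ − φ)|`. Then `P(M = 1) = ℓ/π`, and conditionally on `M < 1`,
`M` has the distribution of `cos(U)` with `U` uniform on `[0, π/2 − ℓ/2]`: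
for every `m`, `P(M ≤ m, M < 1) = (1 − ℓ/π) · P(cos U ≤ m)`. -/
theorem stmt_4 {Ω : Type*} [MeasureSpace Ω] [IsProbabilityMeasure (ℙ : Measure Ω)]
    (ℓ : ℝ) (hℓ : ℓ ∈ Icc 0 π)
    (φ : Ω → ℝ) (hφ : Measurable φ)
    (hφlaw : Measure.map φ ℙ = (ENNReal.ofReal π)⁻¹ • volume.restrict (Icc 0 π))
    (M : Ω → ℝ) (hM : ∀ ω, M ω = sSup ((fun θ => |Real.cos (θ - φ ω)|) '' Icc 0 ℓ)) :
    ℙ {ω | M ω = 1} = ENNReal.ofReal (ℓ / π) ∧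
      ∀ m : ℝ, ℙ {ω | M ω ≤ m ∧ M ω < 1} =
        ENNReal.ofReal (1 - ℓ / π) *
          ((ENNReal.ofReal (π / 2 - ℓ / 2))⁻¹ *
            volume {u ∈ Icc 0 (π / 2 - ℓ / 2) | Real.cos u ≤ m}) := by
  obtain ⟨hℓ0, hℓπ⟩ := hℓ
  have hπ : (0:ℝ) < π := Real.pi_pos
  set a : ℝ := π / 2 - ℓ / 2 with ha
  have ha0 : 0 ≤ a := by simp only [ha]; linarith
  clear_value a
  have hmap : ∀ s : Set ℝ, MeasurableSet s →
      ℙ (φ ⁻¹' s) = (ENNReal.ofReal π)⁻¹ * volume (s ∩ Icc 0 π) := by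
    intro s hs
    rw [← Measure.map_apply hφ hs, hφlaw, Measure.smul_apply, smul_eq_mul,
      Measure.restrict_apply hs]
  have hae : ∀ᵐ ω ∂(ℙ : Measure Ω), φ ω ∈ Icc 0 π := by
    rw [ae_iff]
    have hset : {ω | ¬ φ ω ∈ Icc 0 π} = φ ⁻¹' (Icc 0 π)ᶜ := rfl
    rw [hset, hmap _ measurableSet_Icc.compl]
    simp
  have hMf : ∀ ω, φ ω ∈ Icc 0 π →
      M ω = Real.cos (max 0 (min (φ ω - ℓ) (π - φ ω))) := by
    intro ω hω
    rw [hM ω]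
    exact sup_formula ⟨hℓ0, hℓπ⟩ hω
  -- basic facts about g
  have hgmem : ∀ x : ℝ, x ∈ Icc 0 π → max 0 (min (x - ℓ) (π - x)) ∈ Icc 0 π := by
    intro x hx
    refine ⟨le_max_left _ _, ?_⟩
    rw [max_le_iff]
    exact ⟨hπ.le, le_trans (min_le_right _ _) (by linarith [hx.1])⟩
  constructor
  · -- Part 1
    have hA1 : {ω | M ω = 1} =ᵐ[(ℙ : Measure Ω)] φ ⁻¹' (Icc 0 ℓ ∪ {π}) := by
      filter_upwards [hae] with ω hω
      have hiff : M ω = 1 ↔ φ ω ∈ Icc 0 ℓ ∪ {π} := by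
        rw [hMf ω hω]
        constructor
        · intro h
          have hg0 : max 0 (min (φ ω - ℓ) (π - φ ω)) = 0 := by
            apply Real.injOn_cos (hgmem _ hω) ⟨le_refl 0, hπ.le⟩
            rw [h, Real.cos_zero]
          have hmin : min (φ ω - ℓ) (π - φ ω) ≤ 0 := by
            by_contra hc
            push_neg at hc
            rw [max_eq_right hc.le] at hg0
            exact absurd hg0 (ne_of_gt hc)
          rcases min_le_iff.mp hmin with h' | h'
          · exact Or.inl ⟨hω.1, by linarith⟩
          · exact Or.inr (by simp only [mem_singleton_iff]; linarith [hω.2])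
        · intro h
          have hg0 : max 0 (min (φ ω - ℓ) (π - φ ω)) = 0 := by
            rcases h with h | h
            · exact max_eq_left (le_trans (min_le_left _ _) (by linarith [h.2]))
            · rw [mem_singleton_iff] at h
              exact max_eq_left (le_trans (min_le_right _ _) (by rw [h]; linarith))
          rw [hg0, Real.cos_zero]
      simp only [mem_setOf_eq, mem_preimage, eq_iff_iff]
      exact hiff
    rw [measure_congr hA1,
      hmap _ ((measurableSet_Icc.union (measurableSet_singleton π)))]
    have hsub : Icc 0 ℓ ∪ {π} ⊆ Icc 0 π := by
      rintro x (hx | hx)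
      · exact ⟨hx.1, le_trans hx.2 hℓπ⟩
      · rw [mem_singleton_iff] at hx; exact ⟨by rw [hx]; exact hπ.le, le_of_eq hx⟩
    rw [inter_eq_left.mpr hsub]
    have hvol : volume (Icc 0 ℓ ∪ {π}) = ENNReal.ofReal ℓ := by
      apply le_antisymm
      · refine le_trans (measure_union_le _ _) ?_
        simp [Real.volume_Icc]
      · refine le_trans ?_ (measure_mono subset_union_left)
        simp [Real.volume_Icc]
    rw [hvol, ENNReal.ofReal_div_of_pos hπ, ENNReal.div_eq_inv_mul]
  · -- Part 2
    intro m
    set S : Set ℝ := {x | x ∈ Ioo ℓ π ∧ Real.cos (min (x - ℓ) (π - x)) ≤ m} with hS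
    have hScont : Measurable fun x : ℝ => Real.cos (min (x - ℓ) (π - x)) := by
      fun_prop
    have hSmeas : MeasurableSet S :=
      measurableSet_Ioo.inter (measurableSet_le hScont measurable_const)
    have hA2 : {ω | M ω ≤ m ∧ M ω < 1} =ᵐ[(ℙ : Measure Ω)] φ ⁻¹' S := by
      filter_upwards [hae] with ω hω
      have hiff : (M ω ≤ m ∧ M ω < 1) ↔ φ ω ∈ S := by
        rw [hMf ω hω]
        constructor
        · rintro ⟨h1, h2⟩
          have hminpos : 0 < min (φ ω - ℓ) (π - φ ω) := by
            by_contra hc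
            push_neg at hc
            rw [max_eq_left hc, Real.cos_zero] at h2
            exact lt_irrefl 1 h2
          have hgm : max 0 (min (φ ω - ℓ) (π - φ ω)) = min (φ ω - ℓ) (π - φ ω) :=
            max_eq_right hminpos.le
          rw [hgm] at h1
          exact ⟨⟨by linarith [lt_of_lt_of_le hminpos (min_le_left _ _)],
            by linarith [lt_of_lt_of_le hminpos (min_le_right _ _)]⟩, h1⟩
        · rintro ⟨⟨hl, hr⟩, hcos⟩
          have hminpos : 0 < min (φ ω - ℓ) (π - φ ω) :=
            lt_min (by linarith) (by linarith)
          have hgm : max 0 (min (φ ω - ℓ) (π - φ ω)) = min (φ ω - ℓ) (π - φ ω) :=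
            max_eq_right hminpos.le
          rw [hgm]
          refine ⟨hcos, ?_⟩
          have := Real.strictAntiOn_cos ⟨le_refl 0, hπ.le⟩
            ⟨hminpos.le, le_trans (min_le_right _ _) (by linarith [hω.1])⟩ hminpos
          rw [Real.cos_zero] at this
          exact this
      simp only [mem_setOf_eq, mem_preimage, eq_iff_iff]
      exact hiff
    rw [measure_congr hA2, hmap _ hSmeas]
    have hsub : S ⊆ Icc 0 π := by
      rintro x ⟨hx, -⟩
      exact ⟨by linarith [hx.1], hx.2.le⟩
    rw [inter_eq_left.mpr hsub]
    -- split S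
    set B1 : Set ℝ := {u | u ∈ Ioc 0 a ∧ Real.cos u ≤ m} with hB1
    set B2 : Set ℝ := {u | u ∈ Ioo 0 a ∧ Real.cos u ≤ m} with hB2
    set V : ENNReal := volume {u ∈ Icc 0 a | Real.cos u ≤ m} with hV
    have hB1V : volume B1 = V ∧ volume B2 = V := by
      have m1 : volume B2 ≤ volume B1 :=
        measure_mono (fun u hu => ⟨⟨hu.1.1, hu.1.2.le⟩, hu.2⟩)
      have m2 : volume B1 ≤ V :=
        measure_mono (fun u hu => ⟨⟨hu.1.1.le, hu.1.2⟩, hu.2⟩)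
      have m3 : V ≤ volume B2 := by
        have hsub2 : {u ∈ Icc 0 a | Real.cos u ≤ m} ⊆ B2 ∪ {0, a} := by
          rintro u ⟨⟨hu0, hua⟩, hc⟩
          rcases eq_or_lt_of_le hu0 with h | h
          · exact Or.inr (Or.inl h.symm)
          rcases eq_or_lt_of_le hua with h' | h'
          · exact Or.inr (Or.inr h')
          · exact Or.inl ⟨⟨h, h'⟩, hc⟩
        refine le_trans (measure_mono hsub2) ?_
        refine le_trans (measure_union_le _ _) ?_
        have : volume ({0, a} : Set ℝ) = 0 :=
          Set.Countable.measure_zero (Set.to_countable _) _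
        rw [this, add_zero]
      exact ⟨le_antisymm m2 (le_trans m3 m1), le_antisymm (le_trans m1 m2) m3⟩
    have hT : S = ((fun x => x + (-ℓ)) ⁻¹' B1) ∪
        ((fun x => -x) ⁻¹' ((fun x => x + π) ⁻¹' B2)) := by
      ext x
      simp only [hS, hB1, hB2, mem_setOf_eq, mem_union, mem_preimage, mem_Ioo, mem_Ioc]
      constructor
      · rintro ⟨⟨hl, hr⟩, hc⟩
        rcases le_or_gt x (ℓ + a) with hca | hca
        · left
          have hmin : min (x - ℓ) (π - x) = x - ℓ := min_eq_left (by linarith [ha])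
          rw [hmin] at hc
          refine ⟨⟨by linarith, by linarith [ha]⟩, ?_⟩
          rw [show x + -ℓ = x - ℓ by ring]; exact hc
        · right
          have hmin : min (x - ℓ) (π - x) = π - x := min_eq_right (by linarith [ha])
          rw [hmin] at hc
          refine ⟨⟨by linarith, by linarith [ha]⟩, ?_⟩
          rw [show -x + π = π - x by ring]; exact hc
      · rintro (⟨⟨h1, h2⟩, hc⟩ | ⟨⟨h1, h2⟩, hc⟩)
        · have hmin : min (x - ℓ) (π - x) = x - ℓ := min_eq_left (by linarith [ha])
          rw [show x + -ℓ = x - ℓ by ring] at hc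
          exact ⟨⟨by linarith, by linarith [ha]⟩, by rw [hmin]; exact hc⟩
        · have hmin : min (x - ℓ) (π - x) = π - x := min_eq_right (by linarith [ha])
          rw [show -x + π = π - x by ring] at hc
          exact ⟨⟨by linarith [ha], by linarith⟩, by rw [hmin]; exact hc⟩
    have hB2meas : MeasurableSet B2 :=
      measurableSet_Ioo.inter (measurableSet_le Real.measurable_cos measurable_const)
    have hdisj : Disjoint ((fun x => x + (-ℓ)) ⁻¹' B1)
        ((fun x => -x) ⁻¹' ((fun x => x + π) ⁻¹' B2)) := by
      rw [Set.disjoint_left]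
      rintro x ⟨⟨-, h1⟩, -⟩ ⟨⟨-, h2⟩, -⟩
      simp only [ha] at h1 h2
      linarith
    have hvolS : volume S = V + V := by
      rw [hT, measure_union hdisj
        ((hB2meas.preimage (measurable_add_const π)).preimage measurable_neg),
        measure_preimage_add_right volume (-ℓ) B1,
        Measure.measure_preimage_neg volume _,
        measure_preimage_add_right volume π B2, hB1V.1, hB1V.2]
    rw [hvolS]
    rcases eq_or_lt_of_le hℓπ with hEq | hLt
    · -- ℓ = π: everything is 0
      have haz : a = 0 := by rw [ha, hEq]; ring
      have hV0 : V = 0 := by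
        have hsub0 : {u ∈ Icc 0 a | Real.cos u ≤ m} ⊆ {(0:ℝ)} := by
          rintro u ⟨⟨h1, h2⟩, -⟩
          rw [haz] at h2
          exact mem_singleton_iff.mpr (le_antisymm h2 h1)
        rw [hV]
        exact le_antisymm (le_trans (measure_mono hsub0) (by simp)) zero_le
      rw [hV0]
      have : ENNReal.ofReal (1 - ℓ / π) = 0 := by
        rw [hEq]
        simp [div_self hπ.ne']
      rw [this]
      simp
    · have hapos : 0 < a := by rw [ha]; linarith
      have key : (ENNReal.ofReal π)⁻¹ * 2 = ENNReal.ofReal (1 - ℓ / π) *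
          (ENNReal.ofReal a)⁻¹ := by
        have hnn : (0:ℝ) ≤ 1 - ℓ / π := by
          rw [sub_nonneg, div_le_one hπ]; exact hℓπ
        rw [← ENNReal.ofReal_inv_of_pos hπ, ← ENNReal.ofReal_inv_of_pos hapos,
          show (2 : ENNReal) = ENNReal.ofReal 2 by norm_num,
          ← ENNReal.ofReal_mul (by positivity : (0:ℝ) ≤ π⁻¹),
          ← ENNReal.ofReal_mul hnn]
        congr 1
        have hπℓ : π - ℓ ≠ 0 := ne_of_gt (by linarith)
        have hne : π / 2 - ℓ / 2 ≠ 0 := by intro h; apply hπℓ; linarith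
        rw [ha]
        field_simp
      calc (ENNReal.ofReal π)⁻¹ * (V + V) = ((ENNReal.ofReal π)⁻¹ * 2) * V := by
            ring
        _ = ENNReal.ofReal (1 - ℓ / π) * ((ENNReal.ofReal a)⁻¹ * V) := by
            rw [key, mul_assoc]
end

section
/- As ℓ → 0, the function P_ℓ(s) = (ℓ/π)[1 − exp(−s²/2)] + (2/π)∫₀^{π/2 − ℓ/2} [1 − exp(−s²/(2 cos(u)²))] du converges pointwise to P₀(s) = (2/π)∫₀^{π/2} [1 − exp(−s²/(2 cos(u)²))] du, and P₀(s) = P(|Z| ≤ s) = 2Φ(s) − 1 where Z is standard normal with CDF Φ. Consequently the (1−α)-quantile of P₀ equals Φ⁻¹(1 − α/2). -/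
/-!
Both `P₀` and `2Φ - 1` vanish at `0`, so it suffices to compare derivatives. Differentiating
under the integral sign and substituting `u = arctan t` gives
`(π/2) P₀'(s) = s e^{-s²/2} ∫₀^∞ e^{-s²t²/2} dt = √(π/2) e^{-s²/2}`, i.e. `P₀' = 2φ` with `φ = Φ'`.
The limit `ℓ → 0` is continuity of an integral in its upper limit, the integrand being bounded
by `1`.
-/

open Real Set Filter MeasureTheory ProbabilityTheory

theorem abs_one_sub_exp_neg_sq_div_le_one {c : ℝ} (hc : 0 ≤ c) (x : ℝ) :
    |1 - exp (-x ^ 2 / (2 * c))| ≤ 1 := by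
  have hexp : exp (-x ^ 2 / (2 * c)) ≤ 1 := exp_le_one_iff.2 (by
    apply div_nonpos_of_nonpos_of_nonneg <;> nlinarith [sq_nonneg x])
  rw [abs_of_nonneg (by linarith)]
  linarith [exp_pos (-x ^ 2 / (2 * c))]

-- For `c = 0` both the function and the claimed derivative vanish, as `y / 0 = 0`.
theorem hasDerivAt_one_sub_exp_neg_sq_div (c x : ℝ) :
    HasDerivAt (fun y => 1 - exp (-y ^ 2 / (2 * c))) (x / c * exp (-x ^ 2 / (2 * c))) x := by
  rcases eq_or_ne c 0 with rfl | hc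
  · simpa using hasDerivAt_const x (0 : ℝ)
  · refine ((((hasDerivAt_id x).fun_pow 2).fun_neg.div_const (2 * c)).exp.const_sub 1).congr_deriv
      ?_
    simp only [id]
    field_simp
    ring

theorem div_mul_exp_neg_sq_div_le {x c : ℝ} (hx : 0 < x) (hc : 0 ≤ c) :
    x / c * exp (-x ^ 2 / (2 * c)) ≤ 2 / x := by
  rcases hc.eq_or_lt with rfl | hc
  · simp only [div_zero, zero_mul]; positivity
  · have hy : 0 < x ^ 2 / (2 * c) := by positivity
    have hexp : exp (-x ^ 2 / (2 * c)) ≤ (x ^ 2 / (2 * c))⁻¹ := by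
      rw [neg_div, exp_neg]
      exact inv_anti₀ hy (by linarith [add_one_le_exp (x ^ 2 / (2 * c))])
    calc x / c * exp (-x ^ 2 / (2 * c)) ≤ x / c * (x ^ 2 / (2 * c))⁻¹ := by gcongr
      _ = 2 / x := by field_simp

theorem image_arctan_Ioi_zero : arctan '' Ioi 0 = Ioo 0 (π / 2) := by
  ext u
  constructor
  · rintro ⟨t, ht, rfl⟩
    exact ⟨arctan_pos.2 ht, arctan_lt_pi_div_two t⟩
  · rintro ⟨hu0, hu⟩
    exact ⟨tan u, tan_pos_of_pos_of_lt_pi_div_two hu0 hu, arctan_tan (by linarith) hu⟩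

-- Substitute `u = arctan t`, so that `cos² u = 1 / (1 + t²)` and `du = dt / (1 + t²)`.
theorem integral_div_cos_sq_mul_exp_eq_pi_mul_gaussianPDFReal {s : ℝ} (hs : 0 < s) :
    ∫ u in (0 : ℝ)..(π / 2), s / cos u ^ 2 * exp (-s ^ 2 / (2 * cos u ^ 2)) =
      π * gaussianPDFReal 0 1 s := by
  have hsub := integral_image_eq_integral_abs_deriv_smul (measurableSet_Ioi (a := 0))
    (fun t _ => (hasDerivAt_arctan t).hasDerivWithinAt) arctan_injective.injOn
    (fun u => s / cos u ^ 2 * exp (-s ^ 2 / (2 * cos u ^ 2)))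
  have hintegrand : ∀ t : ℝ, |1 / (1 + t ^ 2)| • (s / cos (arctan t) ^ 2 *
      exp (-s ^ 2 / (2 * cos (arctan t) ^ 2))) =
        s * exp (-s ^ 2 / 2) * exp (-(s ^ 2 / 2) * t ^ 2) := by
    intro t
    rw [cos_sq_arctan, abs_of_pos (by positivity), smul_eq_mul, mul_assoc, ← exp_add]
    field_simp
    ring_nf
  rw [intervalIntegral.integral_of_le (by positivity), integral_Ioc_eq_integral_Ioo,
    ← image_arctan_Ioi_zero, hsub]
  simp only [hintegrand]
  rw [integral_const_mul, integral_gaussian_Ioi, gaussianPDFReal]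
  have hsqrt : √(π / (s ^ 2 / 2)) = √(2 * π) / s := by
    rw [show π / (s ^ 2 / 2) = 2 * π / s ^ 2 by field_simp, sqrt_div' _ (sq_nonneg s),
      sqrt_sq hs.le]
  rw [hsqrt]
  simp only [NNReal.coe_one, mul_one, sub_zero]
  field_simp
  exact sq_sqrt (by positivity)

-- `P₀ = (2 / π) • polarIntegral`.
noncomputable def polarIntegral (s : ℝ) : ℝ :=
  ∫ u in (0 : ℝ)..(π / 2), (1 - exp (-s ^ 2 / (2 * cos u ^ 2)))

theorem measurable_one_sub_exp_neg_sq_div_cos_sq (s : ℝ) :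
    Measurable (fun u => 1 - exp (-s ^ 2 / (2 * cos u ^ 2))) := by
  fun_prop

theorem intervalIntegrable_one_sub_exp_neg_sq_div_cos_sq (s a b : ℝ) :
    IntervalIntegrable (fun u => 1 - exp (-s ^ 2 / (2 * cos u ^ 2))) volume a b :=
  intervalIntegrable_const.mono_fun'
    (measurable_one_sub_exp_neg_sq_div_cos_sq s).aestronglyMeasurable (ae_of_all _ fun u =>
    abs_one_sub_exp_neg_sq_div_le_one (sq_nonneg (cos u)) s)

theorem continuous_polarIntegral : Continuous polarIntegral :=
  intervalIntegral.continuous_of_dominated_interval (bound := fun _ => 1)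
    (fun x => (measurable_one_sub_exp_neg_sq_div_cos_sq x).aestronglyMeasurable)
    (fun x => ae_of_all _ fun u _ => abs_one_sub_exp_neg_sq_div_le_one (sq_nonneg (cos u)) x)
    intervalIntegrable_const (ae_of_all _ fun _ _ => by fun_prop)

theorem hasDerivAt_polarIntegral {s : ℝ} (hs : 0 < s) :
    HasDerivAt polarIntegral (π * gaussianPDFReal 0 1 s) s := by
  have hball : ∀ x ∈ Metric.ball s (s / 2), s / 2 < x := fun x hx => by
    rw [Metric.mem_ball, Real.dist_eq, abs_lt] at hx
    linarith
  rw [← integral_div_cos_sq_mul_exp_eq_pi_mul_gaussianPDFReal hs]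
  refine (intervalIntegral.hasDerivAt_integral_of_dominated_loc_of_deriv_le
    (bound := fun _ => 4 / s) (Metric.ball_mem_nhds s (half_pos hs))
    (Eventually.of_forall fun x =>
      (measurable_one_sub_exp_neg_sq_div_cos_sq x).aestronglyMeasurable)
    (intervalIntegrable_one_sub_exp_neg_sq_div_cos_sq s _ _) (by fun_prop)
    (ae_of_all _ fun u _ x hx => ?_) intervalIntegrable_const
    (ae_of_all _ fun u _ x _ => hasDerivAt_one_sub_exp_neg_sq_div (cos u ^ 2) x)).2
  have hxs := hball x hx
  have hx : 0 < x := by linarith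
  rw [Real.norm_eq_abs, abs_of_nonneg (by positivity)]
  calc x / cos u ^ 2 * exp (-x ^ 2 / (2 * cos u ^ 2)) ≤ 2 / x :=
        div_mul_exp_neg_sq_div_le hx (sq_nonneg _)
    _ ≤ 4 / s := by rw [div_le_div_iff₀ hx hs]; linarith

theorem polarIntegral_eq {s : ℝ} (hs : 0 ≤ s) :
    polarIntegral s = π * ∫ x in (0 : ℝ)..s, gaussianPDFReal 0 1 x := by
  rw [← intervalIntegral.integral_const_mul, intervalIntegral.integral_eq_sub_of_hasDerivAt_of_le
    hs continuous_polarIntegral.continuousOn (fun x hx => hasDerivAt_polarIntegral hx.1)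
    ((integrable_gaussianPDFReal 0 1).intervalIntegrable.const_mul π)]
  simp [polarIntegral]

theorem gaussianReal_Iic_zero_toReal {v : NNReal} (hv : v ≠ 0) :
    (gaussianReal 0 v (Iic 0)).toReal = 1 / 2 := by
  have hsymm :
      ∫ x in Iic (0 : ℝ), gaussianPDFReal 0 v x = ∫ x in Ioi 0, gaussianPDFReal 0 v x := by
    have hneg := integral_comp_neg_Ioi 0 (gaussianPDFReal 0 v)
    simp only [neg_zero] at hneg
    rw [← hneg]
    simp [gaussianPDFReal]
  have htotal := integral_add_compl (measurableSet_Ioi (a := (0 : ℝ)))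
    (integrable_gaussianPDFReal 0 v)
  rw [compl_Ioi, integral_gaussianPDFReal_eq_one 0 hv] at htotal
  rw [gaussianReal_apply_eq_integral 0 hv, ENNReal.toReal_ofReal
    (setIntegral_nonneg measurableSet_Iic fun x _ => gaussianPDFReal_nonneg 0 v x)]
  linarith

theorem gaussianReal_Iic_toReal {v : NNReal} (hv : v ≠ 0) (s : ℝ) :
    (gaussianReal 0 v (Iic s)).toReal = 1 / 2 + ∫ x in 0..s, gaussianPDFReal 0 v x := by
  rw [← gaussianReal_Iic_zero_toReal hv, ← intervalIntegral.integral_Iic_sub_Iic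
    (integrable_gaussianPDFReal 0 v).integrableOn (integrable_gaussianPDFReal 0 v).integrableOn]
  simp only [gaussianReal_apply_eq_integral 0 hv, ENNReal.toReal_ofReal
    (setIntegral_nonneg measurableSet_Iic fun x _ => gaussianPDFReal_nonneg 0 v x)]
  ring

/-- As `ℓ → 0`, `P_ℓ(s)` converges pointwise to
`P₀(s) = (2/π)∫₀^{π/2}[1 − e^{−s²/(2cos²u)}] du`, and `P₀(s) = 2Φ(s) − 1` where `Φ` is
the standard normal CDF; consequently the `(1−α)`-quantile of `P₀` equals `Φ⁻¹(1 − α/2)`,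
i.e. a point `c ≥ 0` satisfies `P₀(c) = 1 − α` iff `Φ(c) = 1 − α/2`. -/
theorem stmt_8 (P : ℝ → ℝ → ℝ)
    (hP : ∀ ℓ ∈ Icc 0 π, ∀ s : ℝ, P ℓ s =
      (ℓ / π) * (1 - Real.exp (-s ^ 2 / 2)) +
        (2 / π) * ∫ u in (0 : ℝ)..(π / 2 - ℓ / 2),
          (1 - Real.exp (-s ^ 2 / (2 * Real.cos u ^ 2))))
    (P₀ : ℝ → ℝ)
    (hP₀ : ∀ s : ℝ, P₀ s =
      (2 / π) * ∫ u in (0 : ℝ)..(π / 2),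
        (1 - Real.exp (-s ^ 2 / (2 * Real.cos u ^ 2))))
    (Φ : ℝ → ℝ) (hΦ : ∀ s : ℝ, Φ s = ((gaussianReal 0 1) (Iic s)).toReal) :
    (∀ s : ℝ, 0 ≤ s → Tendsto (fun ℓ => P ℓ s) (nhdsWithin 0 (Icc 0 π)) (nhds (P₀ s))) ∧
      (∀ s : ℝ, 0 ≤ s → P₀ s = 2 * Φ s - 1) ∧
      ∀ a : ℝ, a ∈ Ioo (0 : ℝ) 1 →
        ∀ c : ℝ, 0 ≤ c → (P₀ c = 1 - a ↔ Φ c = 1 - a / 2) := by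
  have hP₀Φ : ∀ s : ℝ, 0 ≤ s → P₀ s = 2 * Φ s - 1 := fun s hs => by
    rw [hP₀, ← polarIntegral, polarIntegral_eq hs, hΦ, gaussianReal_Iic_toReal one_ne_zero]
    field_simp
    ring
  refine ⟨fun s _ => ?_, hP₀Φ, fun a _ c hc => ?_⟩
  · have hprim := intervalIntegral.continuous_primitive
      (intervalIntegrable_one_sub_exp_neg_sq_div_cos_sq s) 0
    have hcont : Continuous fun ℓ : ℝ => (ℓ / π) * (1 - exp (-s ^ 2 / 2)) +
        (2 / π) * ∫ u in (0 : ℝ)..(π / 2 - ℓ / 2), (1 - exp (-s ^ 2 / (2 * cos u ^ 2))) := by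
      fun_prop
    have hlim := (hcont.tendsto 0).mono_left (nhdsWithin_le_nhds (s := Icc 0 π))
    rw [zero_div, zero_mul, zero_add, zero_div, sub_zero, ← hP₀] at hlim
    exact hlim.congr' (eventually_nhdsWithin_of_forall fun ℓ hℓ => (hP ℓ hℓ s).symm)
  · rw [hP₀Φ c hc]
    constructor <;> intro h <;> linarith
end
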